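/- The function f₄(y) = log(y)³ − 12·Li₃(−y) + 6·log(y)·Li₂(−y), where Li_k(z) = Σ_{p≥1} z^p/p^k, satisfies the fourth-order ODE y³(y+1)f⁗ + y²(6+8y)f‴ + y(7+14y)f″ + (1+4y)f′ = 0 for 0 < y < 1. -/

import Mathlib

/-!
With `θ = y d/dy`, the ladder operator is `y⁻¹ θ² (1 + y) θ²`. Since
`θ Li_{k+1}(-y) = Li_k(-y)` and `Li₁(-y) = -log (1 + y)`, one finds
`θ f₄ = 3 log² y - 6 Li₂(-y) - 6 log y log (1 + y)` and `(1 + y) θ² f₄ = 6 log y`,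
which `θ²` annihilates. Concretely, the four derivatives of `f₄` are written as rational
functions of `y`, `log y` and `θ f₄`, and the ODE becomes a rational identity in these.
-/

/-- The polylogarithm `Li_k(z) = Σ_{p≥1} z^p/p^k`. -/
noncomputable def polylog (k : ℕ) (z : ℝ) : ℝ :=
  ∑' p : ℕ, z ^ (p + 1) / ((p : ℝ) + 1) ^ k

open Real Set Filter

theorem eqOn_iteratedDeriv_of_hasDerivAt {𝕜 E : Type*} [NontriviallyNormedField 𝕜]
    [NormedAddCommGroup E] [NormedSpace 𝕜 E] {s : Set 𝕜} (hs : IsOpen s) {N : ℕ}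
    (F : ℕ → 𝕜 → E) (hF : ∀ n < N, ∀ x ∈ s, HasDerivAt (F n) (F (n + 1) x) x) :
    ∀ n ≤ N, EqOn (iteratedDeriv n (F 0)) (F n) s := by
  intro n hn
  induction n with
  | zero => exact fun x _ => by rw [iteratedDeriv_zero]
  | succ n ih =>
    intro x hx
    have hloc : iteratedDeriv n (F 0) =ᶠ[nhds x] F n :=
      eventually_of_mem (hs.mem_nhds hx) (ih (by omega))
    rw [iteratedDeriv_succ, hloc.deriv_eq, (hF n (by omega) x hx).deriv]

lemma polylog_eq_mul_tsum (k : ℕ) (z : ℝ) :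
    polylog k z = z * ∑' p : ℕ, z ^ p / ((p : ℝ) + 1) ^ k := by
  rw [polylog, ← tsum_mul_left]
  simp only [pow_succ', mul_div_assoc]

lemma hasDerivAt_polylog_succ (k : ℕ) {z : ℝ} (hz : |z| < 1) (hz0 : z ≠ 0) :
    HasDerivAt (polylog (k + 1)) (polylog k z / z) z := by
  obtain ⟨r, hzr, hr1⟩ := exists_between hz
  have hr0 : 0 < r := (abs_nonneg z).trans_lt hzr
  have hseries := hasDerivAt_tsum_of_isPreconnected
    (u := fun p : ℕ => r ^ p)
    (g := fun (p : ℕ) (y : ℝ) => y ^ (p + 1) / ((p : ℝ) + 1) ^ (k + 1))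
    (g' := fun (p : ℕ) (y : ℝ) => y ^ p / ((p : ℝ) + 1) ^ k)
    (summable_geometric_of_lt_one hr0.le hr1) isOpen_Ioo isPreconnected_Ioo
    ?_ ?_ (mem_Ioo.2 ⟨neg_lt_zero.2 hr0, hr0⟩) (by simp) (mem_Ioo.2 (abs_lt.1 hzr))
  · rw [polylog_eq_mul_tsum k z, mul_div_cancel_left₀ _ hz0]
    exact hseries
  · intro p y _
    refine ((hasDerivAt_pow (p + 1) y).div_const (((p : ℝ) + 1) ^ (k + 1))).congr_deriv ?_
    have hp : ((p : ℝ) + 1) ≠ 0 := by positivity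
    rw [Nat.add_sub_cancel, pow_succ _ k, Nat.cast_succ]
    field_simp
  · intro p y hy
    have hyr : |y| ≤ r := abs_le.2 ⟨hy.1.le, hy.2.le⟩
    have hp : 1 ≤ ((p : ℝ) + 1) ^ k := one_le_pow₀ (by linarith [p.cast_nonneg (α := ℝ)])
    rw [norm_div, norm_pow, norm_pow, norm_eq_abs, norm_eq_abs,
      abs_of_pos (by positivity : (0 : ℝ) < p + 1)]
    exact (div_le_self (by positivity) hp).trans (pow_le_pow_left₀ (abs_nonneg y) hyr p)

lemma hasDerivAt_polylog_succ_neg (k : ℕ) {y : ℝ} (hy : |y| < 1) (hy0 : y ≠ 0) :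
    HasDerivAt (fun u => polylog (k + 1) (-u)) (polylog k (-y) / y) y := by
  have h := (hasDerivAt_polylog_succ k (by rwa [abs_neg]) (neg_ne_zero.2 hy0)).comp y
    (hasDerivAt_neg y)
  rwa [div_neg, neg_mul_neg, mul_one] at h

lemma polylog_one_neg {y : ℝ} (hy : |y| < 1) : polylog 1 (-y) = -log (1 + y) := by
  have h := (hasSum_pow_div_log_of_abs_lt_one (x := -y) (by rwa [abs_neg])).tsum_eq
  simpa [polylog] using h

noncomputable def f₄ (u : ℝ) : ℝ :=
  log u ^ 3 - 12 * polylog 3 (-u) + 6 * log u * polylog 2 (-u)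

noncomputable def thetaF₄ (u : ℝ) : ℝ :=
  3 * log u ^ 2 - 6 * polylog 2 (-u) - 6 * log u * log (1 + u)

noncomputable def derivF₄ : ℕ → ℝ → ℝ
  | 0 => f₄
  | 1 => fun y => thetaF₄ y / y
  | 2 => fun y => (6 * log y / (1 + y) - thetaF₄ y) / y ^ 2
  | 3 => fun y => (6 / (1 + y) - 6 * log y * (3 + 4 * y) / (1 + y) ^ 2 + 2 * thetaF₄ y) / y ^ 3
  | _ => fun y => (6 * log y * (11 + 27 * y + 18 * y ^ 2) / (1 + y) ^ 3
      - 12 * (3 + 4 * y) / (1 + y) ^ 2 - 6 * thetaF₄ y) / y ^ 4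

section
variable {y : ℝ} (hy0 : 0 < y) (hy1 : y < 1)
include hy0 hy1

lemma hasDerivAt_f₄ : HasDerivAt f₄ (thetaF₄ y / y) y := by
  have hy : |y| < 1 := abs_lt.2 ⟨by linarith, hy1⟩
  have hlog := hasDerivAt_log hy0.ne'
  have h := ((hlog.pow 3).sub ((hasDerivAt_polylog_succ_neg 2 hy hy0.ne').const_mul 12)).add
    ((hlog.const_mul 6).mul (hasDerivAt_polylog_succ_neg 1 hy hy0.ne'))
  refine h.congr_deriv ?_
  rw [polylog_one_neg hy, thetaF₄]
  field_simp
  ring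

lemma hasDerivAt_thetaF₄ : HasDerivAt thetaF₄ (6 * log y / (y * (1 + y))) y := by
  have hy : |y| < 1 := abs_lt.2 ⟨by linarith, hy1⟩
  have hy' : 1 + y ≠ 0 := by linarith
  have hlog := hasDerivAt_log hy0.ne'
  have hlog1 := ((hasDerivAt_id' y).const_add 1).log hy'
  have h := (((hlog.pow 2).const_mul 3).sub
    ((hasDerivAt_polylog_succ_neg 1 hy hy0.ne').const_mul 6)).sub ((hlog.const_mul 6).mul hlog1)
  refine h.congr_deriv ?_
  rw [polylog_one_neg hy]
  field_simp
  ring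

lemma hasDerivAt_derivF₄ : ∀ n < 4, HasDerivAt (derivF₄ n) (derivF₄ (n + 1) y) y := by
  have hlog := hasDerivAt_log hy0.ne'
  have hθ := hasDerivAt_thetaF₄ hy0 hy1
  have hy : y ≠ 0 := hy0.ne'
  have hy' : 1 + y ≠ 0 := by linarith
  have hlin := (hasDerivAt_id' y).const_add 1
  intro n hn
  interval_cases n
  · exact hasDerivAt_f₄ hy0 hy1
  · refine (hθ.div (hasDerivAt_id' y) hy).congr_deriv ?_
    simp only [derivF₄]
    field_simp
  · refine ((((hlog.const_mul 6).div hlin hy').sub hθ).div (hasDerivAt_pow 2 y)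
      (pow_ne_zero 2 hy)).congr_deriv ?_
    simp only [derivF₄, Pi.sub_apply, Pi.div_apply]
    field_simp
    ring
  · refine (((((hasDerivAt_const y 6).div hlin hy').sub
      (((hlog.const_mul 6).mul (((hasDerivAt_id' y).const_mul 4).const_add 3)).div
        (hlin.pow 2) (pow_ne_zero 2 hy'))).add (hθ.const_mul 2)).div (hasDerivAt_pow 3 y)
      (pow_ne_zero 3 hy)).congr_deriv ?_
    simp only [derivF₄, Pi.add_apply, Pi.sub_apply, Pi.mul_apply, Pi.div_apply, Pi.pow_apply]
    field_simp
    ring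

lemma ladderOperator_derivF₄ :
    y ^ 3 * (y + 1) * derivF₄ 4 y + y ^ 2 * (6 + 8 * y) * derivF₄ 3 y
      + y * (7 + 14 * y) * derivF₄ 2 y + (1 + 4 * y) * derivF₄ 1 y = 0 := by
  have hy : y ≠ 0 := hy0.ne'
  have hy' : 1 + y ≠ 0 := by linarith
  simp only [derivF₄]
  field_simp
  ring

end

/-- `f₄(y) = log(y)³ − 12·Li₃(−y) + 6·log(y)·Li₂(−y)` solves the fourth-order ladder
ODE `y³(y+1)f⁗ + y²(6+8y)f‴ + y(7+14y)f″ + (1+4y)f′ = 0` for `0 < y < 1`. -/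
theorem ladder_ode_solution_f4 :
    ∀ y : ℝ, 0 < y → y < 1 →
      letI f : ℝ → ℝ := fun u =>
        (Real.log u) ^ 3 - 12 * polylog 3 (-u) + 6 * Real.log u * polylog 2 (-u)
      y ^ 3 * (y + 1) * iteratedDeriv 4 f y + y ^ 2 * (6 + 8 * y) * iteratedDeriv 3 f y
        + y * (7 + 14 * y) * iteratedDeriv 2 f y + (1 + 4 * y) * deriv f y = 0 := by
  intro y hy0 hy1
  have hy : y ∈ Ioo (0 : ℝ) 1 := ⟨hy0, hy1⟩
  have hderiv := eqOn_iteratedDeriv_of_hasDerivAt isOpen_Ioo derivF₄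
    (fun n hn x hx => hasDerivAt_derivF₄ hx.1 hx.2 n hn)
  have hode := ladderOperator_derivF₄ hy0 hy1
  rw [← hderiv 4 le_rfl hy, ← hderiv 3 (by norm_num) hy, ← hderiv 2 (by norm_num) hy,
    ← hderiv 1 (by norm_num) hy, iteratedDeriv_one] at hode
  exact hode
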